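/- arXiv:2211.07544 — 3 statements merged into one kernel-verified Lean document; each statement's English description precedes it below -/
import Mathlib

section
/- Fix a Markov policy π = (μ_0,…,μ_{N−1}) and define functions V_k^π : X → [0,1] backwards in time by V_N^π(x) = 1_A(x) and V_k^π(x) = 1_A(x) · ∫_X V_{k+1}^π(y) T(dy | x, μ_k(x)) for 0 ≤ k < N. Then for every 0 ≤ k ≤ N and every x ∈ X, V_k^π(x) equals the probability P_{k,x}^π( x_j ∈ A for all k ≤ j ≤ N ) that the closed-loop trajectory started at x at time k stays in A up to time N. -/
/-!
One transition of the closed-loop evolution started at time `k` writes the next state into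
coordinate `k + 1` and almost surely leaves the coordinates `≤ k` untouched. Hence the
probability of staying in `A` during `[k, N]` factors as `1_A(x_k)` times the integral, over the
next state, of the probability of staying in `A` during `[k + 1, N]`. This is the backward
recursion in `ℝ≥0∞`; its values lie in `[0, 1]`, so taking real parts yields the recursion
defining `V`.
-/

open MeasureTheory ProbabilityTheory Set

noncomputable section

namespace StochasticSafety

variable {X U : Type*} [MeasurableSpace X] [MeasurableSpace U]

/-- A Markov policy: a sequence of (Borel-)measurable maps from states to actions. -/
structure Policy (X U : Type*) [MeasurableSpace X] [MeasurableSpace U] where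
  act : ℕ → X → U
  measurable_act : ∀ k, Measurable (act k)

/-- The closed-loop kernel `κ_k^π(·|x) = T(·|x, μ_k(x))` of a policy at time `k`. -/
def Policy.kernel (T : Kernel (X × U) X) (π : Policy X U) (k : ℕ) : Kernel X X :=
  T.comap (fun x => (x, π.act k x)) (measurable_id.prodMk (π.measurable_act k))

/-- One step of the closed-loop trajectory evolution at time `j`: given the trajectory
built so far, sample `y` from `κ` applied at coordinate `j` and record it at
coordinate `j + 1`. -/
def step (κ : Kernel X X) (j : ℕ) : Kernel (ℕ → X) (ℕ → X) :=
  Kernel.map (Kernel.id ×ₖ κ.comap (fun ω => ω j) (measurable_pi_apply j))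
    (fun p => Function.update p.1 (j + 1) p.2)

/-- Kernel describing `m` steps of the trajectory evolution, starting at time `k`,
under the time-dependent kernels `κ`. -/
def evolve (κ : ℕ → Kernel X X) : ℕ → ℕ → Kernel (ℕ → X) (ℕ → X)
  | _, 0 => Kernel.id
  | k, (m + 1) => (evolve κ (k + 1) m) ∘ₖ step (κ k) k

/-- The law `P_{k,x}^π` of the closed-loop trajectory `(x_k, …, x_N)` started at `x`
at time `k` under policy `π` (finite Ionescu–Tulcea composition of the closed-loop
kernels): the states `x_k, …, x_N` are recorded in coordinates `k, …, N` of `ℕ → X`,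
all other coordinates carry the irrelevant initial value `x`. -/
def trajLaw (T : Kernel (X × U) X) (π : Policy X U) (N k : ℕ) (x : X) :
    Measure (ℕ → X) :=
  evolve (π.kernel T) k (N - k) (fun _ => x)

/-- The event that the trajectory stays in `A` at all times `j` with `k ≤ j ≤ N`. -/
def safeEvent (A : Set X) (k N : ℕ) : Set (ℕ → X) :=
  {ω | ∀ j, k ≤ j → j ≤ N → ω j ∈ A}

/-- The event that the trajectory visits `A` at some time `j` with `k ≤ j ≤ N`. -/
def reachEvent (A : Set X) (k N : ℕ) : Set (ℕ → X) :=
  {ω | ∃ j, k ≤ j ∧ j ≤ N ∧ ω j ∈ A}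

open Function ENNReal

lemma measurableSet_safeEvent {A : Set X} (hA : MeasurableSet A) (k N : ℕ) :
    MeasurableSet (safeEvent A k N) := by
  simp only [safeEvent, ofPred_forall]
  exact .iInter fun j => .iInter fun _ => .iInter fun _ => measurable_pi_apply j hA

omit [MeasurableSpace X] in
lemma safeEvent_self (A : Set X) (k : ℕ) : safeEvent A k k = (fun ω => ω k) ⁻¹' A := by
  ext ω
  refine ⟨fun h => h k le_rfl le_rfl, fun h j hkj hjk => ?_⟩
  obtain rfl := le_antisymm hjk hkj
  exact h

omit [MeasurableSpace X] in
lemma safeEvent_eq_inter (A : Set X) {k N : ℕ} (hk : k ≤ N) :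
    safeEvent A k N = (fun ω => ω k) ⁻¹' A ∩ safeEvent A (k + 1) N := by
  ext ω
  refine ⟨fun h => ⟨h k le_rfl hk, fun j hj hjN => h j (by omega) hjN⟩,
    fun ⟨hωk, h⟩ j hkj hjN => ?_⟩
  rcases hkj.eq_or_lt with rfl | hlt
  · exact hωk
  · exact h j hlt hjN

lemma step_apply (κ : Kernel X X) [IsSFiniteKernel κ] (j : ℕ) (ω : ℕ → X) :
    step κ j ω = (κ (ω j)).map (update ω (j + 1)) := by
  rw [step, Kernel.map_apply _ measurable_update', Kernel.prod_apply, Kernel.id_apply,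
    Kernel.comap_apply, Measure.dirac_prod,
    Measure.map_map measurable_update' measurable_prodMk_left]
  rfl

lemma evolve_succ_apply (κ : ℕ → Kernel X X) [∀ k, IsSFiniteKernel (κ k)] (k m : ℕ)
    (ω : ℕ → X) {S : Set (ℕ → X)} (hS : MeasurableSet S) :
    evolve κ k (m + 1) ω S = ∫⁻ y, evolve κ (k + 1) m (update ω (k + 1) y) S ∂(κ k (ω k)) := by
  rw [evolve, Kernel.comp_apply' _ _ _ hS, step_apply,
    lintegral_map ((evolve κ (k + 1) m).measurable_coe hS) (measurable_update _)]

lemma evolve_preimage_inter (κ : ℕ → Kernel X X) [∀ k, IsSFiniteKernel (κ k)] {B : Set X}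
    (hB : MeasurableSet B) {S : Set (ℕ → X)} (hS : MeasurableSet S) (m : ℕ) :
    ∀ {j k : ℕ}, j ≤ k → ∀ ω : ℕ → X,
      evolve κ k m ω ((fun ω' => ω' j) ⁻¹' B ∩ S) = B.indicator 1 (ω j) * evolve κ k m ω S := by
  induction m with
  | zero =>
    intro j k _ ω
    rw [evolve, Kernel.id_apply, Measure.dirac_apply' _ ((measurable_pi_apply j hB).inter hS),
      Measure.dirac_apply' _ hS]
    by_cases hωj : ω j ∈ B <;> by_cases hωS : ω ∈ S <;> simp [hωj, hωS]
  | succ m ih =>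
    intro j k hjk ω
    have hmeas : Measurable fun y => evolve κ (k + 1) m (update ω (k + 1) y) S :=
      ((evolve κ (k + 1) m).measurable_coe hS).comp (measurable_update ω)
    rw [evolve_succ_apply κ k m ω ((measurable_pi_apply j hB).inter hS),
      evolve_succ_apply κ k m ω hS, ← lintegral_const_mul _ hmeas]
    congr with y
    rw [ih (by omega), update_of_ne (by omega)]

/-- The safety value at time `k` with `m` transitions still to go. -/
def safetyValue (κ : ℕ → Kernel X X) (A : Set X) : ℕ → ℕ → X → ℝ≥0∞
  | _, 0 => A.indicator 1
  | k, m + 1 => A.indicator fun x => ∫⁻ y, safetyValue κ A (k + 1) m y ∂(κ k x)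

lemma measurable_safetyValue (κ : ℕ → Kernel X X) {A : Set X} (hA : MeasurableSet A) (m : ℕ) :
    ∀ k, Measurable (safetyValue κ A k m) := by
  induction m with
  | zero => exact fun _ => measurable_one.indicator hA
  | succ m ih => exact fun k => ((ih (k + 1)).lintegral_kernel (κ := κ k)).indicator hA

lemma safetyValue_le_one (κ : ℕ → Kernel X X) [∀ k, IsMarkovKernel (κ k)] (A : Set X)
    (m : ℕ) : ∀ k x, safetyValue κ A k m x ≤ 1 := by
  induction m with
  | zero => exact fun _ _ => indicator_apply_le' (fun _ => le_rfl) (fun _ => zero_le_one)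
  | succ m ih =>
    refine fun k x => indicator_apply_le' (fun _ => ?_) (fun _ => zero_le_one)
    calc ∫⁻ y, safetyValue κ A (k + 1) m y ∂(κ k x) ≤ ∫⁻ _, 1 ∂(κ k x) :=
          lintegral_mono (ih (k + 1))
      _ = 1 := by simp

lemma toReal_safetyValue_succ (κ : ℕ → Kernel X X) [∀ k, IsMarkovKernel (κ k)] {A : Set X}
    (hA : MeasurableSet A) (k m : ℕ) (x : X) :
    (safetyValue κ A k (m + 1) x).toReal
      = A.indicator (fun x' => ∫ y, (safetyValue κ A (k + 1) m y).toReal ∂(κ k x')) x := by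
  by_cases hx : x ∈ A
  · rw [safetyValue, indicator_of_mem hx, indicator_of_mem hx,
      integral_toReal (measurable_safetyValue κ hA m (k + 1)).aemeasurable
        (ae_of_all _ fun y => (safetyValue_le_one κ A m (k + 1) y).trans_lt one_lt_top)]
  · simp [safetyValue, hx]

lemma evolve_safeEvent (κ : ℕ → Kernel X X) [∀ k, IsSFiniteKernel (κ k)] {A : Set X}
    (hA : MeasurableSet A) (m : ℕ) :
    ∀ k (ω : ℕ → X), evolve κ k m ω (safeEvent A k (k + m)) = safetyValue κ A k m (ω k) := by
  induction m with
  | zero =>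
    intro k ω
    rw [Nat.add_zero, safeEvent_self, evolve, Kernel.id_apply,
      Measure.dirac_apply' _ (measurable_pi_apply k hA)]
    rfl
  | succ m ih =>
    intro k ω
    have hfactor : ∀ y, evolve κ (k + 1) m (update ω (k + 1) y)
        ((fun ω' => ω' k) ⁻¹' A ∩ safeEvent A (k + 1) (k + (m + 1)))
          = A.indicator 1 (ω k) * safetyValue κ A (k + 1) m y := by
      intro y
      rw [evolve_preimage_inter κ hA (measurableSet_safeEvent hA _ _) m k.le_succ,
        update_of_ne (by omega),
        show k + (m + 1) = k + 1 + m by omega, ih, update_self]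
    rw [evolve_succ_apply κ k m ω (measurableSet_safeEvent hA _ _),
      safeEvent_eq_inter A (by omega : k ≤ k + (m + 1))]
    simp_rw [hfactor]
    rw [lintegral_const_mul _ (measurable_safetyValue κ hA m (k + 1))]
    by_cases hx : ω k ∈ A <;> simp [safetyValue, hx]

variable [StandardBorelSpace X] [TopologicalSpace U]
  [TopologicalSpace.MetrizableSpace U] [CompactSpace U] [Nonempty U] [BorelSpace U]

/-- the backward recursion `V_N^π = 1_A`,
`V_k^π(x) = 1_A(x) ∫ V_{k+1}^π(y) T(dy | x, μ_k(x))` computes, at every `0 ≤ k ≤ N`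
and every state `x`, the probability that the closed-loop trajectory started at `x`
at time `k` stays in `A` up to time `N`. -/
theorem policy_value_eq_safety_probability
    (T : Kernel (X × U) X) [IsMarkovKernel T]
    (N : ℕ) (A : Set X) (hA : MeasurableSet A)
    (π : Policy X U) (V : ℕ → X → ℝ)
    (hVN : ∀ x, V N x = A.indicator 1 x)
    (hV : ∀ k < N, ∀ x,
      V k x = A.indicator (fun x' => ∫ y, V (k + 1) y ∂(π.kernel T k x')) x) :
    ∀ k ≤ N, ∀ x, V k x = (trajLaw T π N k x (safeEvent A k N)).toReal := by
  have : ∀ k, IsMarkovKernel (π.kernel T k) := fun k => by unfold Policy.kernel; infer_instance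
  have hV_eq : ∀ m k, k + m = N → ∀ x, V k x = (safetyValue (π.kernel T) A k m x).toReal := by
    intro m
    induction m with
    | zero =>
      rintro k rfl x
      rw [Nat.add_zero] at hVN
      by_cases hx : x ∈ A <;> simp [hVN, safetyValue, hx]
    | succ m ih =>
      intro k hkN x
      rw [hV k (by omega) x, toReal_safetyValue_succ _ hA]
      simp_rw [ih (k + 1) (by omega)]
  intro k hk x
  have hN : safeEvent A k N = safeEvent A k (k + (N - k)) := by rw [Nat.add_sub_cancel' hk]
  rw [hV_eq (N - k) k (by omega) x, trajLaw, hN, evolve_safeEvent _ hA]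

end StochasticSafety
end
end

section
/- (Lemma 3, maximum invariance.) Let V_0,…,V_N : X → ℝ be bounded Borel-measurable functions that are feasible for the maximum-invariance linear program, i.e. V_N(x) = 1 for all x ∈ A, and for all 0 ≤ k < N, all x ∈ A and all u ∈ U, V_k(x) ≥ ∫_A V_{k+1}(y) T(dy|x,u). Then V_k(x) ≥ W_k(x) for every 0 ≤ k ≤ N and every x ∈ A; in other words, there is no feasible solution of the LP that lies strictly below the DP solution at any point of A. -/
/-!
Downward induction on `k`. Each `W_k` takes values in `[0, 1]` and vanishes off `A`, so for
`x ∈ A` and every input `u`,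
`∫ W_{k+1} dT(·|x,u) = ∫_A W_{k+1} dT(·|x,u) ≤ ∫_A V_{k+1} dT(·|x,u) ≤ V_k(x)`,
and taking the supremum over `u` gives `W_k(x) ≤ V_k(x)`.
-/

open MeasureTheory ProbabilityTheory Set

noncomputable section

namespace StochasticSafety

variable {X U : Type*} [MeasurableSpace X] [MeasurableSpace U]

theorem integral_mem_Icc_of_mem_Icc {μ : Measure X} [IsProbabilityMeasure μ] {f : X → ℝ}
    (hf : ∀ y, f y ∈ Icc 0 1) : ∫ y, f y ∂μ ∈ Icc 0 1 := by
  refine ⟨integral_nonneg fun y => (hf y).1, ?_⟩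
  have hnorm : ∀ y, ‖f y‖ ≤ 1 := fun y => by
    rw [Real.norm_of_nonneg (hf y).1]; exact (hf y).2
  calc ∫ y, f y ∂μ ≤ ‖∫ y, f y ∂μ‖ := Real.le_norm_self _
    _ ≤ 1 * μ.real univ := norm_integral_le_of_norm_le_const (ae_of_all _ hnorm)
    _ = 1 := by simp

section Bellman

variable (T : Kernel (X × U) X) (A : Set X)

/-- The maximal DP recursion reads `W_k = bellmanMax T A W_{k+1}`. -/
def bellmanMax (f : X → ℝ) (x : X) : ℝ :=
  ⨆ u : U, A.indicator (fun x' => ∫ y, f y ∂(T (x', u))) x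

theorem bellmanMax_eq_zero_of_notMem {f : X → ℝ} {x : X} (hx : x ∉ A) :
    bellmanMax T A f x = 0 := by
  simp only [bellmanMax, indicator_of_notMem hx, Real.iSup_const_zero]

theorem bellmanMax_mem_Icc [IsMarkovKernel T] {f : X → ℝ} (hf : ∀ y, f y ∈ Icc 0 1) (x : X) :
    bellmanMax T A f x ∈ Icc 0 1 := by
  have hu : ∀ u : U, A.indicator (fun x' => ∫ y, f y ∂(T (x', u))) x ∈ Icc 0 1 := fun u => by
    by_cases hx : x ∈ A
    · rw [indicator_of_mem hx]; exact integral_mem_Icc_of_mem_Icc hf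
    · simp [indicator_of_notMem hx]
  exact ⟨Real.iSup_nonneg fun u => (hu u).1, Real.iSup_le (fun u => (hu u).2) zero_le_one⟩

theorem bellmanMax_le [Nonempty U] (hA : MeasurableSet A) {f v : X → ℝ} {x : X} {c : ℝ}
    (hx : x ∈ A) (hf : ∀ u, Integrable f (T (x, u))) (hv : ∀ u, IntegrableOn v A (T (x, u)))
    (hf0 : ∀ y ∉ A, f y = 0) (hfv : ∀ y ∈ A, f y ≤ v y)
    (hc : ∀ u, ∫ y in A, v y ∂(T (x, u)) ≤ c) :
    bellmanMax T A f x ≤ c := by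
  refine ciSup_le fun u => ?_
  rw [indicator_of_mem hx]
  calc ∫ y, f y ∂(T (x, u)) = ∫ y in A, f y ∂(T (x, u)) :=
        (setIntegral_eq_integral_of_forall_compl_eq_zero hf0).symm
    _ ≤ ∫ y in A, v y ∂(T (x, u)) := setIntegral_mono_on (hf u).integrableOn (hv u) hA hfv
    _ ≤ c := hc u

variable {T A}

theorem maxDP_mem_Icc [IsMarkovKernel T] {N : ℕ} {W : ℕ → X → ℝ}
    (hWN : W N = A.indicator 1) (hW : ∀ k < N, W k = bellmanMax T A (W (k + 1))) :
    ∀ k ≤ N, ∀ x, W k x ∈ Icc 0 1 := by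
  intro k hk
  induction hk using Nat.decreasingInduction with
  | self => intro x; rw [hWN]; by_cases hx : x ∈ A <;> simp [hx]
  | of_succ k hk ih => rw [hW k hk]; exact bellmanMax_mem_Icc T A ih

theorem maxDP_eq_zero_of_notMem {N : ℕ} {W : ℕ → X → ℝ}
    (hWN : W N = A.indicator 1) (hW : ∀ k < N, W k = bellmanMax T A (W (k + 1)))
    {k : ℕ} (hk : k ≤ N) {x : X} (hx : x ∉ A) : W k x = 0 := by
  rcases hk.lt_or_eq with hk | rfl
  · rw [hW k hk]; exact bellmanMax_eq_zero_of_notMem T A hx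
  · rw [hWN, indicator_of_notMem hx]

end Bellman

variable [StandardBorelSpace X] [TopologicalSpace U]
  [TopologicalSpace.MetrizableSpace U] [CompactSpace U] [Nonempty U] [BorelSpace U]

/-- Lemma 3, maximum invariance: any bounded measurable family
`V_0, …, V_N` feasible for the maximum-invariance LP (`V_N = 1` on `A` and
`V_k(x) ≥ ∫_A V_{k+1}(y) T(dy|x,u)` on `A` for every input) dominates the maximal DP
value functions on `A`. -/
theorem lp_feasible_ge_max_dp_value
    (T : Kernel (X × U) X) [IsMarkovKernel T]
    (N : ℕ) (A : Set X) (hA : MeasurableSet A)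
    (W : ℕ → X → ℝ) (hWmeas : ∀ k, Measurable (W k))
    (hWN : ∀ x, W N x = A.indicator 1 x)
    (hW : ∀ k < N, ∀ x,
      W k x = ⨆ u : U, A.indicator (fun x' => ∫ y, W (k + 1) y ∂(T (x', u))) x)
    (V : ℕ → X → ℝ) (hVmeas : ∀ k, Measurable (V k))
    (hVbdd : ∀ k, ∃ C, ∀ x, |V k x| ≤ C)
    (hVN : ∀ x ∈ A, V N x = 1)
    (hfeas : ∀ k < N, ∀ x ∈ A, ∀ u : U,
      ∫ y in A, V (k + 1) y ∂(T (x, u)) ≤ V k x) :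
    ∀ k ≤ N, ∀ x ∈ A, W k x ≤ V k x := by
  have hWN' : W N = A.indicator 1 := funext hWN
  have hWstep : ∀ k < N, W k = bellmanMax T A (W (k + 1)) := fun k hk => funext (hW k hk)
  have hW01 := maxDP_mem_Icc hWN' hWstep
  intro k hk
  induction hk using Nat.decreasingInduction with
  | self => intro x hx; rw [hWN, hVN x hx, indicator_of_mem hx]; rfl
  | of_succ k hk ih =>
    intro x hx
    have hWbdd : ∀ y, ‖W (k + 1) y‖ ≤ 1 := fun y =>
      abs_le.2 ⟨le_trans (by norm_num) (hW01 (k + 1) hk y).1, (hW01 (k + 1) hk y).2⟩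
    obtain ⟨C, hC⟩ := hVbdd (k + 1)
    rw [hWstep k hk]
    exact bellmanMax_le T A hA hx
      (fun u => .of_bound (hWmeas _).aestronglyMeasurable 1 (ae_of_all _ hWbdd))
      (fun u => (Integrable.of_bound (hVmeas _).aestronglyMeasurable C (ae_of_all _ hC)).integrableOn)
      (fun y hy => maxDP_eq_zero_of_notMem hWN' hWstep hk hy) ih (hfeas k hk x hx)

end StochasticSafety
end
end

section
/- (Lemma 3, minimum invariance analogue.) Let V_0,…,V_N : X → ℝ be bounded Borel-measurable functions that are feasible for the minimum-invariance linear program, i.e. V_N(x) = 1 for all x ∈ A, and for all 0 ≤ k < N, all x ∈ A and all u ∈ U, V_k(x) ≤ ∫_A V_{k+1}(y) T(dy|x,u). Then V_k(x) ≤ W_k^min(x) for every 0 ≤ k ≤ N and every x ∈ A; in other words, there is no feasible solution of the LP that lies strictly above the DP solution at any point of A. -/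
/-!
Downward induction on `k`. The minimal DP values stay in `[0, 1]`, so they are integrable and
nonnegative; then `V_k(x) ≤ ∫_A V_{k+1} ≤ ∫_A W_{k+1}^min ≤ ∫ W_{k+1}^min` for every input `u`,
and taking the infimum over `u` gives `V_k(x) ≤ W_k^min(x)` on `A`.
-/

open MeasureTheory ProbabilityTheory Set

noncomputable section

namespace StochasticSafety

variable {X U : Type*} [MeasurableSpace X] [MeasurableSpace U]

theorem integral_mono_of_integrable_of_nonneg {α : Type*} [MeasurableSpace α] {μ : Measure α}
    {f g : α → ℝ} (hg : Integrable g μ) (hg0 : 0 ≤ᵐ[μ] g) (hfg : f ≤ᵐ[μ] g) :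
    ∫ a, f a ∂μ ≤ ∫ a, g a ∂μ := by
  -- A non-integrable `f` has the junk integral `0`, which `0 ≤ g` still bounds.
  by_cases hf : Integrable f μ
  · exact integral_mono_ae hf hg hfg
  · rw [integral_undef hf]
    exact integral_nonneg_of_ae hg0

theorem integrable_of_mem_Icc {α : Type*} [MeasurableSpace α] {μ : Measure α} [IsFiniteMeasure μ]
    {f : α → ℝ} (hf : Measurable f) (hf01 : ∀ a, f a ∈ Icc 0 1) : Integrable f μ :=
  Integrable.of_bound hf.aestronglyMeasurable 1 <|
    ae_of_all _ fun a => abs_le.2 ⟨by linarith [(hf01 a).1], (hf01 a).2⟩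

theorem integral_mem_Icc_zero_one {α : Type*} [MeasurableSpace α] {μ : Measure α}
    [IsProbabilityMeasure μ] {f : α → ℝ} (hf01 : ∀ a, f a ∈ Icc 0 1) :
    ∫ a, f a ∂μ ∈ Icc 0 1 := by
  refine ⟨integral_nonneg fun a => (hf01 a).1, ?_⟩
  calc ∫ a, f a ∂μ ≤ ∫ _, (1 : ℝ) ∂μ :=
        integral_mono_of_nonneg (ae_of_all _ fun a => (hf01 a).1) (integrable_const 1)
          (ae_of_all _ fun a => (hf01 a).2)
    _ = 1 := by simp

def minDPStep (T : Kernel (X × U) X) (A : Set X) (W : X → ℝ) (x : X) : ℝ :=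
  ⨅ u : U, A.indicator (fun x' => ∫ y, W y ∂(T (x', u))) x

theorem minDPStep_mem_Icc [Nonempty U] (T : Kernel (X × U) X) [IsMarkovKernel T] (A : Set X)
    {W : X → ℝ} (hW01 : ∀ y, W y ∈ Icc 0 1) (x : X) : minDPStep T A W x ∈ Icc 0 1 := by
  have hterm : ∀ u : U, A.indicator (fun x' => ∫ y, W y ∂(T (x', u))) x ∈ Icc 0 1 := by
    intro u
    by_cases hx : x ∈ A
    · rw [indicator_of_mem hx]
      exact integral_mem_Icc_zero_one hW01
    · rw [indicator_of_notMem hx]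
      exact ⟨le_rfl, zero_le_one⟩
  obtain ⟨u₀⟩ := ‹Nonempty U›
  exact ⟨le_ciInf fun u => (hterm u).1,
    (ciInf_le ⟨0, forall_mem_range.2 fun u => (hterm u).1⟩ u₀).trans (hterm u₀).2⟩

theorem le_minDPStep [Nonempty U] {T : Kernel (X × U) X} {A : Set X} (hA : MeasurableSet A)
    {V W : X → ℝ} (hWint : ∀ p, Integrable W (T p)) (hW0 : ∀ y, 0 ≤ W y)
    (hVW : ∀ y ∈ A, V y ≤ W y) {c : ℝ} {x : X} (hx : x ∈ A)
    (hc : ∀ u, c ≤ ∫ y in A, V y ∂(T (x, u))) : c ≤ minDPStep T A W x := by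
  refine le_ciInf fun u => ?_
  rw [indicator_of_mem hx]
  calc c ≤ ∫ y in A, V y ∂(T (x, u)) := hc u
    _ ≤ ∫ y in A, W y ∂(T (x, u)) :=
      integral_mono_of_integrable_of_nonneg (hWint _).integrableOn (ae_of_all _ hW0)
        (ae_restrict_of_forall_mem hA hVW)
    _ ≤ ∫ y, W y ∂(T (x, u)) := setIntegral_le_integral (hWint _) (ae_of_all _ hW0)

variable [StandardBorelSpace X] [TopologicalSpace U]
  [TopologicalSpace.MetrizableSpace U] [CompactSpace U] [Nonempty U] [BorelSpace U]

theorem lp_feasible_le_min_dp_value_general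
    (T : Kernel (X × U) X) [IsMarkovKernel T]
    (N : ℕ) (A : Set X) (hA : MeasurableSet A)
    (Wmin : ℕ → X → ℝ) (hWmeas : ∀ k, Measurable (Wmin k))
    (hWN : ∀ x, Wmin N x = A.indicator 1 x)
    (hW : ∀ k < N, ∀ x,
      Wmin k x = ⨅ u : U, A.indicator (fun x' => ∫ y, Wmin (k + 1) y ∂(T (x', u))) x)
    (V : ℕ → X → ℝ)
    (hVN : ∀ x ∈ A, V N x = 1)
    (hfeas : ∀ k < N, ∀ x ∈ A, ∀ u : U,
      V k x ≤ ∫ y in A, V (k + 1) y ∂(T (x, u))) :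
    ∀ k ≤ N, ∀ x ∈ A, V k x ≤ Wmin k x := by
  have hWmin01 : ∀ k ≤ N, ∀ x, Wmin k x ∈ Icc 0 1 := by
    intro k hk
    induction hk using Nat.decreasingInduction with
    | self =>
      intro x
      rw [hWN]
      by_cases hx : x ∈ A <;> simp [hx]
    | of_succ k hk ih =>
      intro x
      rw [hW k hk x]
      exact minDPStep_mem_Icc T A ih x
  intro k hk
  induction hk using Nat.decreasingInduction with
  | self =>
    intro x hx
    rw [hVN x hx, hWN, indicator_of_mem hx, Pi.one_apply]
  | of_succ k hk ih =>
    intro x hx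
    rw [hW k hk x]
    exact le_minDPStep hA (fun _ => integrable_of_mem_Icc (hWmeas _) (hWmin01 _ hk))
      (fun y => (hWmin01 _ hk y).1) ih hx (hfeas k hk x hx)

/-- Lemma 3, minimum invariance analogue: any bounded measurable family
`V_0, …, V_N` feasible for the minimum-invariance LP (`V_N = 1` on `A` and
`V_k(x) ≤ ∫_A V_{k+1}(y) T(dy|x,u)` on `A` for every input) is dominated by the
minimal DP value functions on `A`. -/
theorem lp_feasible_le_min_dp_value
    (T : Kernel (X × U) X) [IsMarkovKernel T]
    (N : ℕ) (A : Set X) (hA : MeasurableSet A)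
    (Wmin : ℕ → X → ℝ) (hWmeas : ∀ k, Measurable (Wmin k))
    (hWN : ∀ x, Wmin N x = A.indicator 1 x)
    (hW : ∀ k < N, ∀ x,
      Wmin k x = ⨅ u : U, A.indicator (fun x' => ∫ y, Wmin (k + 1) y ∂(T (x', u))) x)
    (V : ℕ → X → ℝ) (hVmeas : ∀ k, Measurable (V k))
    (hVbdd : ∀ k, ∃ C, ∀ x, |V k x| ≤ C)
    (hVN : ∀ x ∈ A, V N x = 1)
    (hfeas : ∀ k < N, ∀ x ∈ A, ∀ u : U,
      V k x ≤ ∫ y in A, V (k + 1) y ∂(T (x, u))) :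
    ∀ k ≤ N, ∀ x ∈ A, V k x ≤ Wmin k x :=
  lp_feasible_le_min_dp_value_general T N A hA Wmin hWmeas hWN hW V hVN hfeas

end StochasticSafety
end
end
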